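/- arXiv:1604.02167 — 4 statements merged into one kernel-verified Lean document; each statement's English description precedes it below -/
import Mathlib

section
/- Catenation of directed figures is associative: for directed figures x, y, z over an alphabet Σ, (x ∘ y) ∘ z is defined if and only if x ∘ (y ∘ z) is defined, and in that case (x ∘ y) ∘ z = x ∘ (y ∘ z). -/
namespace DF

/-- A directed figure over alphabet `A`: a finitely-supported labelling of `ℤ²`
together with a start point and an end point. (Equality up to translation is
expressed by `EquivT` below.) -/
structure Fig (A : Type) where
  lab : ℤ × ℤ → Option A
  beg : ℤ × ℤ
  en : ℤ × ℤ
  finiteDom : Set.Finite {p : ℤ × ℤ | lab p ≠ none}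

variable {A : Type}

/-- The domain of a directed figure. -/
def Fig.dom (x : Fig A) : Set (ℤ × ℤ) := {p | x.lab p ≠ none}

/-- The translation vector of a directed figure. -/
def Fig.tv (x : Fig A) : ℤ × ℤ := x.en - x.beg

/-- A figure is nonempty if its domain is nonempty. -/
def Fig.NonEmpty (x : Fig A) : Prop := x.dom.Nonempty

/-- Translation of a directed figure by a vector `u`. -/
def trF (u : ℤ × ℤ) (x : Fig A) : Fig A where
  lab := fun p => x.lab (p - u)
  beg := x.beg + u
  en := x.en + u
  finiteDom := by
    apply (x.finiteDom.image (fun p => p + u)).subset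
    intro p hp
    exact ⟨p - u, hp, by simp⟩

/-- Equality of directed figures up to translation. -/
def EquivT (x y : Fig A) : Prop := ∃ u : ℤ × ℤ, trF u x = y

/-- Merging of two optional labels using merging function `m`. -/
def merge (m : A → A → A) : Option A → Option A → Option A
  | some a, some b => some (m a b)
  | some a, none => some a
  | none, b => b

/-- `m`-catenation of directed figures (always defined). -/
def mcat (m : A → A → A) (x y : Fig A) : Fig A where
  lab := fun p => merge m (x.lab p) (y.lab (p - (x.en - y.beg)))
  beg := x.beg
  en := y.en + (x.en - y.beg)
  finiteDom := by
    apply ((x.finiteDom).union ((y.finiteDom).image (fun p => p + (x.en - y.beg)))).subset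
    intro p hp
    simp only [Set.mem_union, Set.mem_setOf_eq, Set.mem_image]
    by_cases hx : x.lab p = none
    · right
      refine ⟨p - (x.en - y.beg), ?_, by simp⟩
      intro hy
      apply hp
      show merge m (x.lab p) (y.lab (p - (x.en - y.beg))) = none
      rw [hx, hy]; rfl
    · left; exact hx

/-- The underlying (total) operation of non-merging catenation; it represents
the actual catenation `x ∘ y` exactly when `CatDef x y` holds. -/
def cat (x y : Fig A) : Fig A := mcat (fun a _ => a) x y

/-- The non-merging catenation `x ∘ y` is defined iff the domain of `x` is disjoint
from the translated domain of `y`. -/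
def CatDef (x y : Fig A) : Prop :=
  Disjoint x.dom ((fun p => p + (x.en - y.beg)) '' y.dom)

/-- The empty directed figure ε. -/
def eps : Fig A :=
  { lab := fun _ => none, beg := 0, en := 0,
    finiteDom := by simp }

/-- Product (left-associated) of a list of figures under `m`-catenation. -/
def prodM (m : A → A → A) : List (Fig A) → Fig A
  | [] => eps
  | x :: l => l.foldl (mcat m) x

/-- Product (left-associated) of a list of figures under non-merging catenation. -/
def prodC : List (Fig A) → Fig A
  | [] => eps
  | x :: l => l.foldl cat x

/-- All successive catenations in `x ∘ y₁ ∘ y₂ ∘ ⋯` are defined. -/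
def ChainDef : Fig A → List (Fig A) → Prop
  | _, [] => True
  | x, y :: l => CatDef x y ∧ ChainDef (cat x y) l

/-- All catenations in the (left-associated) product of a list are defined. -/
def ProdDef : List (Fig A) → Prop
  | [] => True
  | x :: l => ChainDef x l

/-- Uniquely decipherable code (non-merging catenation). -/
def IsUDCode (X : Finset (Fig A)) : Prop :=
  ∀ xs ys : List (Fig A), xs ≠ [] → ys ≠ [] →
    (∀ a ∈ xs, a ∈ X) → (∀ a ∈ ys, a ∈ X) →
    ProdDef xs → ProdDef ys → EquivT (prodC xs) (prodC ys) → xs = ys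

/-- Multiset decipherable code (non-merging catenation). -/
def IsMSDCode (X : Finset (Fig A)) : Prop :=
  ∀ xs ys : List (Fig A), xs ≠ [] → ys ≠ [] →
    (∀ a ∈ xs, a ∈ X) → (∀ a ∈ ys, a ∈ X) →
    ProdDef xs → ProdDef ys → EquivT (prodC xs) (prodC ys) →
    (xs : Multiset (Fig A)) = (ys : Multiset (Fig A))

/-- Set decipherable code (non-merging catenation). -/
def IsSDCode (X : Finset (Fig A)) : Prop :=
  ∀ xs ys : List (Fig A), xs ≠ [] → ys ≠ [] →
    (∀ a ∈ xs, a ∈ X) → (∀ a ∈ ys, a ∈ X) →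
    ProdDef xs → ProdDef ys → EquivT (prodC xs) (prodC ys) →
    ∀ a : Fig A, a ∈ xs ↔ a ∈ ys

/-- Numerically decipherable code (non-merging catenation). -/
def IsNDCode (X : Finset (Fig A)) : Prop :=
  ∀ xs ys : List (Fig A), xs ≠ [] → ys ≠ [] →
    (∀ a ∈ xs, a ∈ X) → (∀ a ∈ ys, a ∈ X) →
    ProdDef xs → ProdDef ys → EquivT (prodC xs) (prodC ys) →
    xs.length = ys.length

/-- Uniquely decipherable `m`-code. -/
def IsUDmCode (m : A → A → A) (X : Finset (Fig A)) : Prop :=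
  ∀ xs ys : List (Fig A), xs ≠ [] → ys ≠ [] →
    (∀ a ∈ xs, a ∈ X) → (∀ a ∈ ys, a ∈ X) →
    EquivT (prodM m xs) (prodM m ys) → xs = ys

/-- Multiset decipherable `m`-code. -/
def IsMSDmCode (m : A → A → A) (X : Finset (Fig A)) : Prop :=
  ∀ xs ys : List (Fig A), xs ≠ [] → ys ≠ [] →
    (∀ a ∈ xs, a ∈ X) → (∀ a ∈ ys, a ∈ X) →
    EquivT (prodM m xs) (prodM m ys) →
    (xs : Multiset (Fig A)) = (ys : Multiset (Fig A))

/-- Set decipherable `m`-code. -/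
def IsSDmCode (m : A → A → A) (X : Finset (Fig A)) : Prop :=
  ∀ xs ys : List (Fig A), xs ≠ [] → ys ≠ [] →
    (∀ a ∈ xs, a ∈ X) → (∀ a ∈ ys, a ∈ X) →
    EquivT (prodM m xs) (prodM m ys) →
    ∀ a : Fig A, a ∈ xs ↔ a ∈ ys

/-- Numerically decipherable `m`-code. -/
def IsNDmCode (m : A → A → A) (X : Finset (Fig A)) : Prop :=
  ∀ xs ys : List (Fig A), xs ≠ [] → ys ≠ [] →
    (∀ a ∈ xs, a ∈ X) → (∀ a ∈ ys, a ∈ X) →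
    EquivT (prodM m xs) (prodM m ys) →
    xs.length = ys.length

lemma Fig.ext' {x y : Fig A} (h1 : x.lab = y.lab) (h2 : x.beg = y.beg)
    (h3 : x.en = y.en) : x = y := by
  cases x; cases y; cases h1; cases h2; cases h3; rfl

lemma merge_eq_none (m : A → A → A) (a b : Option A) :
    merge m a b = none ↔ a = none ∧ b = none := by
  cases a <;> cases b <;> simp [merge]

lemma dom_cat (x y : Fig A) :
    (cat x y).dom = x.dom ∪ ((fun p => p + (x.en - y.beg)) '' y.dom) := by
  ext p
  simp only [Fig.dom, cat, mcat, Set.mem_setOf_eq, Set.mem_union, Set.mem_image,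
    ne_eq, merge_eq_none, not_and_or]
  constructor
  · rintro (h | h)
    · exact Or.inl h
    · exact Or.inr ⟨p - (x.en - y.beg), h, by ring⟩
  · rintro (h | ⟨q, hq, rfl⟩)
    · exact Or.inl h
    · exact Or.inr (by simpa using hq)

lemma tr_image (a b : ℤ × ℤ) (S : Set (ℤ × ℤ)) :
    (fun p => p + a) '' ((fun p => p + b) '' S) = (fun p => p + (b + a)) '' S := by
  rw [← Set.image_comp]
  apply Set.image_congr
  intro q _
  simp [add_assoc]

lemma tr_inj (a : ℤ × ℤ) : Function.Injective (fun p : ℤ × ℤ => p + a) :=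
  fun p q h => by simpa using h

/-- Catenation of directed figures is associative, including that one side is
defined iff the other is. -/
theorem stmt0 {A : Type} (x y z : Fig A) :
    ((CatDef x y ∧ CatDef (cat x y) z) ↔ (CatDef y z ∧ CatDef x (cat y z))) ∧
    (CatDef x y → CatDef (cat x y) z →
      cat (cat x y) z = cat x (cat y z)) := by
  have hu : ∀ (v w : Fig A), (cat v w).beg = v.beg := fun _ _ => rfl
  have he : ∀ (v w : Fig A), (cat v w).en = w.en + (v.en - w.beg) := fun _ _ => rfl
  constructor
  · unfold CatDef
    rw [dom_cat, dom_cat, Set.image_union, tr_image,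
      Set.disjoint_union_left, Set.disjoint_union_right]
    simp only [he, hu]
    have e1 : y.en + (x.en - y.beg) - z.beg = x.en - y.beg + (y.en - z.beg) := by ring
    have e2 : y.en - z.beg + (x.en - y.beg) = x.en - y.beg + (y.en - z.beg) := by ring
    rw [e1, e2]
    have e3 : Disjoint ((fun p => p + (x.en - y.beg)) '' y.dom)
        ((fun p => p + (x.en - y.beg + (y.en - z.beg))) '' z.dom) ↔
        Disjoint y.dom ((fun p => p + (y.en - z.beg)) '' z.dom) := by
      rw [show x.en - y.beg + (y.en - z.beg) = y.en - z.beg + (x.en - y.beg) from by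
        ring, ← tr_image (x.en - y.beg) (y.en - z.beg)]
      exact Set.disjoint_image_iff (tr_inj (x.en - y.beg))
    constructor
    · rintro ⟨h1, h2, h3⟩
      exact ⟨e3.mp h3, h1, h2⟩
    · rintro ⟨h4, h1, h2⟩
      exact ⟨h1, h2, e3.mpr h4⟩
  · intro _ _
    apply Fig.ext'
    · funext p
      show merge _ (merge _ (x.lab p) (y.lab (p - (x.en - y.beg))))
          (z.lab (p - ((cat x y).en - z.beg))) =
        merge _ (x.lab p) (merge _ (y.lab (p - (x.en - (cat y z).beg)))
          (z.lab (p - (x.en - (cat y z).beg) - (y.en - z.beg))))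
      have a1 : p - ((cat x y).en - z.beg)
          = p - (x.en - (cat y z).beg) - (y.en - z.beg) := by
        rw [he, hu]; ring
      have a2 : p - (x.en - y.beg) = p - (x.en - (cat y z).beg) := by
        rw [hu]
      rw [a1, a2]
      cases x.lab p <;>
        cases y.lab (p - (x.en - (cat y z).beg)) <;>
        cases z.lab (p - (x.en - (cat y z).beg) - (y.en - z.beg)) <;>
        rfl
    · rfl
    · show z.en + ((cat x y).en - z.beg) = (cat y z).en + (x.en - (cat y z).beg)
      rw [he, he, hu]; ring


end DF
end

section
/- If m : Σ × Σ → Σ is an associative binary operation, then m-catenation of directed figures is associative: (x ∘ₘ y) ∘ₘ z = x ∘ₘ (y ∘ₘ z) for all directed figures x, y, z over Σ. -/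
namespace DF

variable {A : Type}

lemma merge_assoc {A : Type} (m : A → A → A)
    (hm : ∀ a b c, m (m a b) c = m a (m b c)) (a b c : Option A) :
    merge m (merge m a b) c = merge m a (merge m b c) := by
  cases a <;> cases b <;> cases c <;> simp [merge, hm]

/-- If `m` is associative then `m`-catenation of directed figures is associative. -/
theorem stmt1 {A : Type} (m : A → A → A)
    (hm : ∀ a b c, m (m a b) c = m a (m b c)) (x y z : Fig A) :
    mcat m (mcat m x y) z = mcat m x (mcat m y z) := by
  simp only [mcat, Fig.mk.injEq]
  refine ⟨funext fun p => ?_, by simp; ring⟩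
  have h : p - (y.en + (x.en - y.beg) - z.beg) = p - (x.en - y.beg) - (y.en - z.beg) := by ring
  rw [h, merge_assoc m hm]

end DF
end

section
/- There exists a singleton set X = {x} of directed figures and an associative merging function m such that X is a UD code but not a UD m-code. -/
namespace DF

variable {A : Type}

def x0 : Fig Unit where
  lab := fun p => if p = 0 then some () else none
  beg := 0
  en := 0
  finiteDom := by
    apply (Set.finite_singleton (0 : ℤ × ℤ)).subset
    intro p hp
    by_contra h
    simp only [Set.mem_singleton_iff] at h
    simp [Fig.dom, h] at hp

lemma trF_zero (x : Fig Unit) : trF 0 x = x := by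
  cases x with
  | mk lab beg en fin =>
    simp only [trF, Fig.mk.injEq]
    refine ⟨funext fun p => by simp, by simp, by simp⟩

lemma dom_x0 : x0.dom = {0} := by
  ext p
  simp only [Fig.dom, x0, Set.mem_setOf_eq, Set.mem_singleton_iff]
  split <;> simp_all

lemma not_catdef : ¬ CatDef x0 x0 := by
  intro h
  have h0 : (0 : ℤ × ℤ) ∈ x0.dom := by rw [dom_x0]; rfl
  have h1 : (0 : ℤ × ℤ) ∈ (fun p => p + (x0.en - x0.beg)) '' x0.dom := by
    rw [dom_x0]; exact ⟨0, rfl, by simp [x0]⟩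
  exact Set.disjoint_left.mp h h0 h1

lemma mcat_x0 (m : Unit → Unit → Unit) : mcat m x0 x0 = x0 := by
  simp only [mcat, x0, Fig.mk.injEq]
  refine ⟨funext fun p => ?_, trivial, by simp⟩
  simp only [sub_self, sub_zero]
  split <;> rfl

lemma list_eq (xs : List (Fig Unit)) (h : xs ≠ []) (hX : ∀ a ∈ xs, a = x0)
    (hp : ProdDef xs) : xs = [x0] := by
  match xs with
  | [] => exact absurd rfl h
  | [a] => simp [hX a (by simp)]
  | a :: b :: l =>
    exfalso
    have ha := hX a (by simp)
    have hb := hX b (by simp)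
    have : CatDef a b := hp.1
    rw [ha, hb] at this
    exact not_catdef this

/-- There is a singleton set of directed figures (over the one-letter alphabet)
and an associative merging function `m` such that the set is a UD code but not
a UD `m`-code. -/
theorem stmt6 :
    ∃ (x : Fig Unit) (m : Unit → Unit → Unit),
      (∀ a b c, m (m a b) c = m a (m b c)) ∧
      Fig.NonEmpty x ∧
      IsUDCode ({x} : Finset (Fig Unit)) ∧
      ¬ IsUDmCode m ({x} : Finset (Fig Unit)) := by
  refine ⟨x0, fun _ _ => (), fun _ _ _ => rfl, ⟨0, by rw [dom_x0]; rfl⟩, ?_, ?_⟩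
  · intro xs ys hxs hys hX hY hpx hpy _
    rw [list_eq xs hxs (fun a ha => Finset.mem_singleton.mp (hX a ha)) hpx,
        list_eq ys hys (fun a ha => Finset.mem_singleton.mp (hY a ha)) hpy]
  · intro h
    have := h [x0] [x0, x0] (by simp) (by simp) (by simp) (by simp) ?_
    · simp at this
    · show EquivT (prodM _ [x0]) (prodM _ [x0, x0])
      have : prodM (fun _ _ => ()) [x0, x0] = x0 := by
        simp [prodM, mcat_x0]
      rw [this]
      exact ⟨0, trF_zero x0⟩


end DF
end

section
/- The word set {a, ab, ba} over {a, b} is a numerically decipherable code but not a multiset decipherable code: z₁z₃ = z₂z₁ for z₁ = a, z₂ = ab, z₃ = ba witnesses MSD failure, while any two factorizations of the same word over {a, ab, ba} have the same number of factors. -/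
lemma stmt17_aux : ∀ xs : List (List Bool),
    (∀ w ∈ xs, w ∈ ({[false], [false,true], [true,false]} : Set (List Bool))) →
    xs.length + xs.flatten.count true = xs.flatten.length := by
  intro xs
  induction xs with
  | nil => simp
  | cons h t ih =>
    intro hmem
    have hh := hmem h (by simp)
    have ht := ih (fun w hw => hmem w (by simp [hw]))
    simp only [Set.mem_insert_iff, Set.mem_singleton_iff] at hh
    rcases hh with rfl | rfl | rfl <;>
      simp_all [List.count_cons, List.flatten_cons, List.count_append] <;> omega

/- Word codes over the two-letter alphabet {a, b}, encoded as `List Bool`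
with `a = false`, `b = true`.  Products of factor sequences are list joins. -/

/-- `{a, ab, ba}` is ND but not MSD (with `a = false`, `b = true`):
`z₁z₃ = z₂z₁`, any two factorizations of the same word have the same number of
factors, and multiset decipherability fails. -/
theorem stmt17 :
    let a := false; let b := true
    let z1 : List Bool := [a]
    let z2 : List Bool := [a, b]
    let z3 : List Bool := [b, a]
    let X : Set (List Bool) := {z1, z2, z3}
    (z1 ++ z3 = z2 ++ z1) ∧
    (∀ xs ys : List (List Bool), (∀ w ∈ xs, w ∈ X) → (∀ w ∈ ys, w ∈ X) →
      xs.flatten = ys.flatten → xs.length = ys.length) ∧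
    ¬ (∀ xs ys : List (List Bool), (∀ w ∈ xs, w ∈ X) → (∀ w ∈ ys, w ∈ X) →
      xs.flatten = ys.flatten → (xs : Multiset (List Bool)) = (ys : Multiset (List Bool))) := by
  refine ⟨rfl, ?_, ?_⟩
  · intro xs ys hxs hys hflat
    have h1 := stmt17_aux xs hxs
    have h2 := stmt17_aux ys hys
    rw [hflat] at h1
    omega
  · intro h
    have := h [[false], [true, false]] [[false, true], [false]]
      (by intro w hw; simp at hw; rcases hw with rfl | rfl <;> simp)
      (by intro w hw; simp at hw; rcases hw with rfl | rfl <;> simp)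
      rfl
    simp at this
    exact absurd this (by decide)
end
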